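/- arXiv:math/0012072 — 3 statements merged into one kernel-verified Lean document; each statement's English description precedes it below -/
import Mathlib

section
/- For every real ν with |ν − 1| ≤ 1 and every y > 0, the integral ∫₀^∞ e^{−y²·w} ϑ(ν/2 | w) dw converges absolutely and cosh((ν−1)y)/(y·sinh(y)) = ∫₀^∞ e^{−y²·w} ϑ(ν/2 | w) dw. -/
open MeasureTheory ProbabilityTheory Real Set

/-- The theta function `ϑ(z|t) = (πt)^{-1/2} Σ_{n ∈ ℤ} exp (-(z+n)²/t)`. -/
noncomputable def theta (z t : ℝ) : ℝ :=
  (Real.sqrt (Real.pi * t))⁻¹ * ∑' n : ℤ, Real.exp (-(z + n)^2 / t)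

/-- The Theta integral `Θ_k(h) = (1/(2√2)) ∫_0^∞ ϑ(ν/2 | w) w^{k-1}/(wh+1/2)^{k+1/2} dw`. -/
noncomputable def ThetaInt (ν h : ℝ) (k : ℕ) : ℝ :=
  (2 * Real.sqrt 2)⁻¹ *
    ∫ w in Set.Ioi (0:ℝ), theta (ν/2) w * w^(k-1) / (w*h + 1/2) ^ ((k:ℝ) + 1/2)

/-!
Each term of `ϑ(ν/2 | w) = Σₙ (πw)^{-1/2} e^{-(ν/2+n)²/w}` has an elementary Laplace transform:
`∫₀^∞ e^{-a²w} (πw)^{-1/2} e^{-c²/w} dw = e^{-2a|c|}/a`. The substitution `w = t²` turns it into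
`∫₀^∞ exp(-(at - b/t)²) dt = √π/(2a)` with `b = |c|` (Cauchy–Schlömilch): the inversion
`t ↦ b/(at)` shows that the weights `a` and `b/t²` give the same integral, and `u = at - b/t`
turns the integral with weight `a + b/t²` into the Gaussian integral `√π`.
For `0 ≤ ν/2 ≤ 1` the values `e^{-2y|ν/2+n|}` form two geometric series, over `n ≥ 0` and
`n < 0`, adding up to `cosh((ν-1)y)/sinh y`. All terms are nonnegative, so summation and
integration commute.
-/

section Substitutions

variable {E : Type*} [NormedAddCommGroup E] [NormedSpace ℝ E]

theorem integral_comp_div_Ioi {c : ℝ} (hc : 0 < c) (g : ℝ → E) :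
    ∫ t in Ioi 0, (c / t ^ 2) • g (c / t) = ∫ t in Ioi 0, g t := by
  have hderiv : ∀ t ∈ Ioi (0 : ℝ), HasDerivWithinAt (fun t => c / t) (-(c / t ^ 2)) (Ioi 0) t :=
    fun t ht => by
      simpa [div_eq_mul_inv] using ((hasDerivAt_inv (ne_of_gt ht)).const_mul c).hasDerivWithinAt
  have hinj : InjOn (fun t => c / t) (Ioi 0) :=
    StrictAntiOn.injOn fun _ hx _ _ hxy => div_lt_div_of_pos_left hc hx hxy
  have himage : (fun t => c / t) '' Ioi 0 = Ioi 0 := by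
    ext u
    refine ⟨fun ⟨t, ht, hu⟩ => hu ▸ div_pos hc ht, fun hu => ⟨c / u, div_pos hc hu, ?_⟩⟩
    field_simp [(mem_Ioi.mp hu).ne']
  conv_rhs =>
    rw [← himage, integral_image_eq_integral_abs_deriv_smul measurableSet_Ioi hderiv hinj]
  refine setIntegral_congr_fun measurableSet_Ioi fun t ht => ?_
  rw [abs_neg, abs_of_pos (div_pos hc (pow_pos ht 2))]

theorem integral_comp_sq_Ioi (g : ℝ → E) :
    ∫ t in Ioi 0, (2 * t) • g (t ^ 2) = ∫ w in Ioi 0, g w := by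
  have := integral_comp_rpow_Ioi_of_pos (g := g) two_pos
  norm_num [Real.rpow_two] at this
  exact this

theorem integrableOn_comp_sq_Ioi_iff (g : ℝ → E) :
    IntegrableOn (fun t => (2 * t) • g (t ^ 2)) (Ioi 0) ↔ IntegrableOn g (Ioi 0) := by
  have := integrableOn_Ioi_comp_rpow_iff g two_ne_zero
  norm_num [Real.rpow_two] at this
  exact this

theorem hasDerivAt_mul_sub_div (a b : ℝ) {t : ℝ} (ht : t ≠ 0) :
    HasDerivAt (fun t => a * t - b / t) (a + b / t ^ 2) t := by
  simpa only [div_eq_mul_inv, mul_one, mul_neg, sub_neg_eq_add] using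
    ((hasDerivAt_id' t).const_mul a).fun_sub ((hasDerivAt_inv ht).const_mul b)

variable {a b : ℝ}

theorem strictMonoOn_mul_sub_div (ha : 0 < a) (hb : 0 ≤ b) :
    StrictMonoOn (fun t => a * t - b / t) (Ioi 0) := fun x hx y _ hxy => by
  have : b / y ≤ b / x := div_le_div_of_nonneg_left hb hx hxy.le
  have : a * x < a * y := mul_lt_mul_of_pos_left hxy ha
  dsimp only
  linarith

/-- The positive root of `a t² - u t - b = 0` is a preimage of `u`. -/
theorem image_mul_sub_div_Ioi (ha : 0 < a) (hb : 0 < b) :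
    (fun t => a * t - b / t) '' Ioi 0 = univ := by
  refine eq_univ_of_forall fun u => ?_
  set s := √(u ^ 2 + 4 * a * b)
  have hs : s ^ 2 = u ^ 2 + 4 * a * b := sq_sqrt (by positivity)
  have hus : 0 < u + s := by
    have : |u| < s := by
      rw [← sqrt_sq_eq_abs]; exact sqrt_lt_sqrt (sq_nonneg u) (by linarith [mul_pos ha hb])
    linarith [neg_abs_le u]
  refine ⟨(u + s) / (2 * a), div_pos hus (by positivity), ?_⟩
  field_simp
  linear_combination hs

theorem integral_comp_mul_sub_div (ha : 0 < a) (hb : 0 < b) (g : ℝ → E) :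
    ∫ t in Ioi 0, (a + b / t ^ 2) • g (a * t - b / t) = ∫ u, g u := by
  symm
  rw [← setIntegral_univ, ← image_mul_sub_div_Ioi ha hb,
    integral_image_eq_integral_abs_deriv_smul measurableSet_Ioi
      (fun t ht => (hasDerivAt_mul_sub_div a b (ne_of_gt ht)).hasDerivWithinAt)
      (strictMonoOn_mul_sub_div ha hb.le).injOn]
  refine setIntegral_congr_fun measurableSet_Ioi fun t ht => ?_
  have : 0 < t := ht
  rw [abs_of_pos (by positivity)]

theorem integrableOn_comp_mul_sub_div_iff (ha : 0 < a) (hb : 0 < b) (g : ℝ → E) :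
    IntegrableOn (fun t => (a + b / t ^ 2) • g (a * t - b / t)) (Ioi 0) ↔ Integrable g := by
  rw [← integrableOn_univ, ← image_mul_sub_div_Ioi ha hb,
    integrableOn_image_iff_integrableOn_abs_deriv_smul measurableSet_Ioi
      (fun t ht => (hasDerivAt_mul_sub_div a b (ne_of_gt ht)).hasDerivWithinAt)
      (strictMonoOn_mul_sub_div ha hb.le).injOn]
  refine integrableOn_congr_fun (fun t ht => ?_) measurableSet_Ioi
  have : 0 < t := ht
  rw [abs_of_pos (by positivity)]

theorem integrableOn_add_div_sq_mul_exp_neg_sq_mul_sub_div (ha : 0 < a) (hb : 0 < b) :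
    IntegrableOn (fun t => (a + b / t ^ 2) * exp (-(a * t - b / t) ^ 2)) (Ioi 0) :=
  (integrableOn_comp_mul_sub_div_iff ha hb fun u => exp (-u ^ 2)).mpr
    (by simpa using integrable_exp_neg_mul_sq one_pos)

theorem integrableOn_exp_neg_sq_mul_sub_div (ha : 0 < a) (hb : 0 ≤ b) :
    IntegrableOn (fun t => exp (-(a * t - b / t) ^ 2)) (Ioi 0) := by
  rcases hb.eq_or_lt with rfl | hb
  · simpa [mul_pow] using (integrable_exp_neg_mul_sq (pow_pos ha 2)).integrableOn
  refine ((integrableOn_add_div_sq_mul_exp_neg_sq_mul_sub_div ha hb).const_mul a⁻¹).mono'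
    (by fun_prop) ?_
  filter_upwards [ae_restrict_mem measurableSet_Ioi] with t ht
  rw [norm_of_nonneg (exp_pos _).le, le_inv_mul_iff₀ ha]
  gcongr
  exact le_add_of_nonneg_right (div_nonneg hb.le (sq_nonneg t))

theorem integral_exp_neg_sq_mul_sub_div (ha : 0 < a) (hb : 0 ≤ b) :
    ∫ t in Ioi 0, exp (-(a * t - b / t) ^ 2) = √π / (2 * a) := by
  rcases hb.eq_or_lt with rfl | hb
  · simp_rw [zero_div, sub_zero, mul_pow, ← neg_mul]
    rw [integral_gaussian_Ioi, sqrt_div pi_pos.le, sqrt_sq ha.le]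
    ring
  set f := fun t => exp (-(a * t - b / t) ^ 2)
  have hf : IntegrableOn f (Ioi 0) := integrableOn_exp_neg_sq_mul_sub_div ha hb.le
  have hjac := integrableOn_add_div_sq_mul_exp_neg_sq_mul_sub_div ha hb
  have hjac_eq : ∫ t in Ioi 0, (a + b / t ^ 2) * f t = √π := by
    simpa [smul_eq_mul] using (integral_comp_mul_sub_div ha hb fun u => exp (-u ^ 2)).trans
      (by simpa using integral_gaussian 1)
  -- `t ↦ (b / a) / t` preserves `f` and exchanges the two halves of the Jacobian
  have hswap : ∫ t in Ioi 0, b / t ^ 2 * f t = ∫ t in Ioi 0, a * f t := by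
    rw [← integral_comp_div_Ioi (div_pos hb ha) fun t => a * f t]
    refine setIntegral_congr_fun measurableSet_Ioi fun t (ht : 0 < t) => ?_
    have hft : f (b / a / t) = f t := by
      simp only [f]
      congr 1
      field_simp
      ring
    rw [smul_eq_mul, hft]
    field_simp
  have hsplit : ∫ t in Ioi 0, (a + b / t ^ 2) * f t
      = (∫ t in Ioi 0, a * f t) + ∫ t in Ioi 0, b / t ^ 2 * f t := by
    simp_rw [add_mul]
    refine integral_add (hf.const_mul a) ?_
    refine (hjac.sub (hf.const_mul a)).congr_fun (fun t _ => ?_) measurableSet_Ioi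
    simp only [Pi.sub_apply, f]
    ring
  rw [hsplit, hswap, integral_const_mul] at hjac_eq
  field_simp
  linarith

end Substitutions

theorem hasSum_exp_neg_abs_add_int {a z : ℝ} (ha : 0 < a) (hz₀ : 0 ≤ z) (hz₁ : z ≤ 1) :
    HasSum (fun n : ℤ => exp (-(2 * a * |z + n|))) (cosh ((2 * z - 1) * a) / sinh a) := by
  set r := exp (-(2 * a)) with hr_def
  have hr : HasSum (fun n : ℕ => r ^ n) (1 - r)⁻¹ :=
    hasSum_geometric_of_lt_one (exp_pos _).le (exp_lt_one_iff.mpr (by linarith))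
  have hnat : HasSum (fun n : ℕ => exp (-(2 * a * |z + (n : ℤ)|)))
      (exp (-(2 * a * z)) * (1 - r)⁻¹) := by
    refine (hr.mul_left _).congr_fun fun n => ?_
    rw [Int.cast_natCast, abs_of_nonneg (by positivity), hr_def, ← exp_nat_mul, ← exp_add]
    ring_nf
  have hneg : HasSum (fun n : ℕ => exp (-(2 * a * |z + ((-(n + 1) : ℤ) : ℝ)|)))
      (exp (-(2 * a * (1 - z))) * (1 - r)⁻¹) := by
    refine (hr.mul_left _).congr_fun fun n => ?_
    push_cast
    rw [abs_of_nonpos (by linarith), hr_def, ← exp_nat_mul, ← exp_add]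
    ring_nf
  have hnum : exp (-(2 * a * z)) + exp (-(2 * a * (1 - z)))
      = 2 * exp (-a) * cosh ((2 * z - 1) * a) := by
    rw [show -(2 * a * z) = -a + -((2 * z - 1) * a) by ring,
      show -(2 * a * (1 - z)) = -a + (2 * z - 1) * a by ring, exp_add, exp_add, cosh_eq]
    ring
  have hden : 1 - r = 2 * exp (-a) * sinh a := by
    rw [hr_def, sinh_eq, show -(2 * a) = -a + -a by ring, exp_add, exp_neg]
    field_simp
  convert HasSum.of_nat_of_neg_add_one (f := fun n : ℤ => exp (-(2 * a * |z + n|))) hnat hneg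
    using 1
  rw [← add_mul, hnum, hden]
  have := sinh_pos_iff.mpr ha
  field_simp

theorem integrable_tsum_of_summable_integral_norm {α E ι : Type*} [MeasurableSpace α]
    {μ : Measure α} [NormedAddCommGroup E] [CompleteSpace E] [Countable ι] {F : ι → α → E}
    (hF_int : ∀ i, Integrable (F i) μ) (hF_sum : Summable fun i => ∫ a, ‖F i a‖ ∂μ) :
    Integrable (fun a => ∑' i, F i a) μ := by
  set f : ι → α →₁[μ] E := fun i => (hF_int i).toL1 (F i)
  have hf : ∑' i, ‖f i‖ₑ ≠ ⊤ := by
    simp_rw [f, ← ofReal_norm, L1.norm_of_fun_eq_integral_norm,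
      ← ENNReal.ofReal_tsum_of_nonneg (fun i => integral_nonneg fun a => norm_nonneg _) hF_sum]
    exact ENNReal.ofReal_ne_top
  have hcoe : ∀ᵐ a ∂μ, ∀ i, f i a = F i a := ae_all_iff.mpr fun i => Integrable.coeFn_toL1 _
  refine (L1.integrable_coeFn (∑' i, f i)).congr ?_
  filter_upwards [Lp.coeFn_tsum hf, hcoe] with a ha hcoe_a
  simp only [ha, hcoe_a]

-- the heat kernel of `∂_w = ¼ ∂_c²`
noncomputable def heatKernel (c w : ℝ) : ℝ :=
  (√(π * w))⁻¹ * exp (-c ^ 2 / w)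

theorem theta_eq_tsum_heatKernel (z t : ℝ) : theta z t = ∑' n : ℤ, heatKernel (z + n) t := by
  simp only [theta, heatKernel, tsum_mul_left]

section HeatKernel

variable {a : ℝ}

theorem mul_exp_neg_mul_heatKernel_sq (c : ℝ) {t : ℝ} (ht : 0 < t) :
    (2 * t) * (exp (-a ^ 2 * t ^ 2) * heatKernel c (t ^ 2))
      = 2 / √π * exp (-(2 * a * |c|)) * exp (-(a * t - |c| / t) ^ 2) := by
  have hsqrt : √(π * t ^ 2) = √π * t := by rw [sqrt_mul pi_pos.le, sqrt_sq ht.le]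
  have hexp : -a ^ 2 * t ^ 2 + -c ^ 2 / t ^ 2 = -(2 * a * |c|) + -(a * t - |c| / t) ^ 2 := by
    field_simp
    rw [← sq_abs c]
    ring
  rw [heatKernel, hsqrt, mul_left_comm (exp _), ← exp_add, hexp, exp_add]
  have := sqrt_pos.mpr pi_pos
  field_simp

theorem integrableOn_exp_neg_mul_heatKernel (ha : 0 < a) (c : ℝ) :
    IntegrableOn (fun w => exp (-a ^ 2 * w) * heatKernel c w) (Ioi 0) := by
  rw [← integrableOn_comp_sq_Ioi_iff]
  refine IntegrableOn.congr_fun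
    ((integrableOn_exp_neg_sq_mul_sub_div ha (abs_nonneg c)).const_mul
      (2 / √π * exp (-(2 * a * |c|)))) (fun t ht => ?_) measurableSet_Ioi
  rw [smul_eq_mul, mul_exp_neg_mul_heatKernel_sq c ht]

theorem integral_exp_neg_mul_heatKernel (ha : 0 < a) (c : ℝ) :
    ∫ w in Ioi 0, exp (-a ^ 2 * w) * heatKernel c w = exp (-(2 * a * |c|)) / a := by
  rw [← integral_comp_sq_Ioi]
  simp only [smul_eq_mul]
  rw [setIntegral_congr_fun measurableSet_Ioi fun t ht => mul_exp_neg_mul_heatKernel_sq c ht,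
    integral_const_mul, integral_exp_neg_sq_mul_sub_div ha (abs_nonneg c)]
  have := sqrt_pos.mpr pi_pos
  field_simp

end HeatKernel

/-- For `|ν - 1| ≤ 1` and `y > 0`, the integral `∫_0^∞ e^{-y² w} ϑ(ν/2 | w) dw` converges
absolutely and equals `cosh((ν-1)y)/(y sinh y)`. -/
theorem hyperbolic_quotient_as_theta_laplace_transform
    (ν : ℝ) (hν : |ν - 1| ≤ 1) (y : ℝ) (hy : 0 < y) :
    IntegrableOn (fun w => Real.exp (-(y^2) * w) * theta (ν/2) w) (Set.Ioi 0) volume ∧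
    Real.cosh ((ν - 1) * y) / (y * Real.sinh y)
      = ∫ w in Set.Ioi (0:ℝ), Real.exp (-(y^2) * w) * theta (ν/2) w := by
  obtain ⟨hν₀, hν₁⟩ : 0 ≤ ν / 2 ∧ ν / 2 ≤ 1 := by
    constructor <;> linarith [abs_le.mp hν]
  set F : ℤ → ℝ → ℝ := fun n w => exp (-y ^ 2 * w) * heatKernel (ν / 2 + n) w
  have hF_int (n : ℤ) : IntegrableOn (F n) (Ioi 0) := integrableOn_exp_neg_mul_heatKernel hy _
  have hF_nonneg (n : ℤ) (w : ℝ) : 0 ≤ F n w := by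
    simp only [F, heatKernel]
    positivity
  have hF_sum : HasSum (fun n => ∫ w in Ioi 0, F n w) (cosh ((ν - 1) * y) / (y * sinh y)) := by
    simp only [F, integral_exp_neg_mul_heatKernel hy]
    rw [mul_comm y, ← div_div, show ν - 1 = 2 * (ν / 2) - 1 by ring]
    exact (hasSum_exp_neg_abs_add_int hy hν₀ hν₁).div_const y
  have hF_sum_norm : Summable fun n => ∫ w in Ioi 0, ‖F n w‖ := by
    simpa only [norm_of_nonneg (hF_nonneg _ _)] using hF_sum.summable
  have htheta : (fun w => exp (-(y ^ 2) * w) * theta (ν / 2) w) = fun w => ∑' n, F n w := by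
    funext w
    rw [theta_eq_tsum_heatKernel, ← tsum_mul_left]
  rw [htheta, ← integral_tsum_of_summable_integral_norm hF_int hF_sum_norm, hF_sum.tsum_eq]
  exact ⟨integrable_tsum_of_summable_integral_norm hF_int hF_sum_norm, rfl⟩
end

section
/- For every real x and every t > 0: 1 + 2·Σ_{n=1}^∞ (−1)^n e^{−(πn)²·t} cos(2πnx) = (πt)^{−1/2} · Σ_{n∈ℤ} exp(−(x − 1/2 + n)²/t), both series converging absolutely. -/
open Real

/-!
Poisson summation for the Gaussian `exp (-π a y ^ 2 - 2π i b y)`, after taking real parts, gives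
`∑ₙ exp (-π a n²) cos (2π b n) = a^(-1/2) ∑ₙ exp (-π (n + b)² / a)`. For `a = π t` and
`b = x - 1/2` the shift by a half turns `cos (2π b n)` into `(-1)ⁿ cos (2π n x)`, and folding the
even sum over `ℤ` onto `n ≥ 1` gives the left-hand side.
-/

lemma summable_exp_neg_pi_mul_int_add_sq {a : ℝ} (ha : 0 < a) (c : ℝ) :
    Summable fun n : ℤ => exp (-π * a * (n + c) ^ 2) :=
  (HurwitzKernelBounds.summable_f_int 0 c ha).congr fun n => by
    simp only [HurwitzKernelBounds.f_int, pow_zero, one_mul]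
    ring_nf

lemma hasSum_exp_neg_pi_mul_int_sq_mul_cos {a : ℝ} (ha : 0 < a) (b : ℝ) :
    HasSum (fun n : ℤ => exp (-π * a * n ^ 2) * cos (2 * π * b * n))
      ((√a)⁻¹ * ∑' n : ℤ, exp (-π / a * (n + b) ^ 2)) := by
  set f : ℤ → ℂ := fun n => Complex.exp (-π * a * n ^ 2 + 2 * π * (-Complex.I * b) * n)
  have hf : Summable f := by
    refine .of_norm ((summable_exp_neg_pi_mul_int_add_sq ha 0).congr fun n => ?_)
    simp [f, Complex.norm_exp, sq]
  have hpoisson := Complex.tsum_exp_neg_quadratic (a := a) (by simpa using ha) (-Complex.I * b)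
  have hrhs : ∀ n : ℤ, Complex.exp (-π / a * (n + Complex.I * (-Complex.I * b)) ^ 2)
      = (exp (-π / a * (n + b) ^ 2) : ℂ) := by
    intro n
    rw [← mul_assoc, mul_neg, Complex.I_mul_I, neg_neg, one_mul]
    push_cast; rfl
  have hsqrt : (1 : ℂ) / (a : ℂ) ^ (1 / 2 : ℂ) = ((√a)⁻¹ : ℝ) := by
    rw [Real.sqrt_eq_rpow, one_div, Complex.ofReal_inv, Complex.ofReal_cpow ha.le]
    norm_num
  rw [tsum_congr hrhs, ← Complex.ofReal_tsum, hsqrt, ← Complex.ofReal_mul] at hpoisson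
  convert Complex.hasSum_re (hpoisson ▸ hf.hasSum) using 1
  · ext n
    simp [f, Complex.exp_re, sq]
  · rw [Complex.ofReal_re]

lemma cos_two_pi_mul_sub_half_mul_nat (x : ℝ) (n : ℕ) :
    cos (2 * π * (x - 1 / 2) * n) = (-1) ^ n * cos (2 * π * n * x) := by
  rw [show 2 * π * (x - 1 / 2) * n = 2 * π * n * x - n * π by ring, cos_sub_nat_mul_pi]

/-- The Jacobi transformation formula for the theta function, at real arguments: for `x ∈ ℝ`
and `t > 0`, `1 + 2 Σ_{n≥1} (-1)^n e^{-(πn)² t} cos(2πnx) = (πt)^{-1/2} Σ_{n∈ℤ} e^{-(x-1/2+n)²/t}`,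
both series converging absolutely. -/
theorem jacobi_transformation_formula (x t : ℝ) (ht : 0 < t) :
    Summable (fun n : ℕ =>
      |(-1)^(n+1) * Real.exp (-(Real.pi*((n:ℝ)+1))^2 * t) * Real.cos (2*Real.pi*((n:ℝ)+1)*x)|) ∧
    Summable (fun n : ℤ => |Real.exp (-(x - 1/2 + (n:ℝ))^2 / t)|) ∧
    1 + 2 * ∑' n : ℕ,
        (-1)^(n+1) * Real.exp (-(Real.pi*((n:ℝ)+1))^2 * t) * Real.cos (2*Real.pi*((n:ℝ)+1)*x)
      = (Real.sqrt (Real.pi * t))⁻¹ * ∑' n : ℤ, Real.exp (-(x - 1/2 + (n:ℝ))^2 / t) := by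
  set f : ℤ → ℝ := fun n => exp (-π * (π * t) * n ^ 2) * cos (2 * π * (x - 1 / 2) * n)
  have hπt : 0 < π * t := by positivity
  have hpoisson : HasSum f _ := hasSum_exp_neg_pi_mul_int_sq_mul_cos hπt (x - 1 / 2)
  have hf_even : f.Even := fun n => by simp [f, mul_neg]
  have hf_succ : ∀ n : ℕ, f (n + 1 : ℕ) =
      (-1) ^ (n + 1) * exp (-(π * ((n : ℝ) + 1)) ^ 2 * t) * cos (2 * π * ((n : ℝ) + 1) * x) := by
    intro n
    simp only [f, Int.cast_natCast, cos_two_pi_mul_sub_half_mul_nat]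
    push_cast
    ring_nf
  have hgauss : ∀ n : ℤ, -π / (π * t) * (n + (x - 1 / 2)) ^ 2 = -(x - 1 / 2 + n) ^ 2 / t := by
    intro n
    field_simp
    ring
  refine ⟨?_, ?_, ?_⟩
  · refine ((summable_nat_add_iff 1).mpr
      (hpoisson.summable.abs.comp_injective Nat.cast_injective)).congr fun n => ?_
    rw [Function.comp_apply, hf_succ]
  · refine (summable_exp_neg_pi_mul_int_add_sq (inv_pos.mpr hπt) (x - 1 / 2)).congr fun n => ?_
    rw [abs_of_pos (exp_pos _), ← hgauss, ← div_eq_mul_inv]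
  · simp only [hgauss] at hpoisson
    rw [← hpoisson.tsum_eq, tsum_int_eq_zero_add_two_mul_tsum_pnat hf_even hpoisson.summable,
      tsum_pnat_eq_tsum_succ (f := fun n : ℕ => f n), tsum_congr hf_succ]
    simp [f]
end

section
/- For every ν ∈ ℝ, h > 0 and integer n ≥ 1, with I_n(z) := ∫₀^∞ e^{−zt} · t^{n−1} · (1+t)^{−(n+1/2)} dt for z ≥ 0 (so that I_n(z) = Γ(n)·Ψ(n, 1/2; z) with Ψ the confluent hypergeometric function of the second kind), the series Σ_{m=1}^∞ cos(πmν) · I_n((πm)²/(2h)) converges absolutely and Θ_n(h) = (1/(2h^n)) · I_n(0) + (1/h^n) · Σ_{m=1}^∞ cos(πmν) · I_n((πm)²/(2h)). -/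
open MeasureTheory Real Set

/-!
By the Jacobi imaginary transformation, `ϑ(z | w) = 1 + 2 Σ_{m ≥ 1} e^{-π²m²w} cos (2πmz)`.
The substitution `w = t / (2h)` turns `Θ_n(h)` into
`(1 / (2hⁿ)) ∫₀^∞ ϑ(ν/2 | t/(2h)) tⁿ⁻¹ (1 + t)^{-(n + 1/2)} dt`.
The weight is integrable and bounded by `1`, so the `m`-th term of the expanded integrand has
`L¹` norm at most `4h / (πm)²`; hence the series may be integrated term by term, and the same
bound gives absolute convergence.
-/

theorem theta_eq_cosKernel (z : ℝ) {w : ℝ} (hw : 0 < w) :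
    theta z w = HurwitzZeta.cosKernel z (π * w) := by
  have hπw : 0 < π * w := by positivity
  have hsum : ∑' n : ℤ, exp (-(z + n) ^ 2 / w) = HurwitzZeta.evenKernel z (1 / (π * w)) := by
    refine ((HurwitzZeta.hasSum_int_evenKernel z (by positivity)).congr_fun fun n => ?_).tsum_eq
    congr 1
    field_simp
    ring
  rw [theta, hsum, HurwitzZeta.evenKernel_functional_equation, one_div_one_div, one_div (π * w),
    inv_rpow hπw.le, one_div, inv_inv, ← sqrt_eq_rpow, ← mul_assoc,
    inv_mul_cancel₀ (sqrt_pos.2 hπw).ne', one_mul]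

/-- The constant term is kept inside the series, so that integrating term by term needs no
separate integrability argument for the tail. -/
noncomputable def thetaCoeff (z : ℝ) (k : ℕ) : ℝ :=
  if k = 0 then 1 else 2 * cos (2 * π * z * k)

theorem abs_thetaCoeff_le (z : ℝ) (k : ℕ) : |thetaCoeff z k| ≤ 2 := by
  unfold thetaCoeff
  split_ifs
  · norm_num
  · rw [abs_mul, abs_two]
    linarith [abs_cos_le_one (2 * π * z * k)]

theorem hasSum_theta (z : ℝ) {w : ℝ} (hw : 0 < w) :
    HasSum (fun k : ℕ => thetaCoeff z k * exp (-(π * k) ^ 2 * w)) (theta z w) := by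
  have h0 : thetaCoeff z 0 * exp (-(π * (0 : ℕ)) ^ 2 * w) = 1 := by simp [thetaCoeff]
  rw [← hasSum_nat_add_iff' 1, theta_eq_cosKernel z hw, Finset.sum_range_one, h0]
  refine (HurwitzZeta.hasSum_nat_cosKernel₀ z (mul_pos pi_pos hw)).congr_fun fun m => ?_
  simp only [thetaCoeff, Nat.add_eq_zero_iff, one_ne_zero, and_false, ↓reduceIte]
  push_cast
  ring_nf

theorem summable_div_pi_mul_add_one_sq (C c : ℝ) :
    Summable (fun m : ℕ => C / ((π * (m + 1)) ^ 2 / c)) := by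
  have h := (summable_nat_add_iff 1).2 (Real.summable_one_div_nat_pow.2 one_lt_two)
  refine (h.mul_left (C * c / π ^ 2)).congr fun m => ?_
  push_cast
  field_simp

theorem integrableOn_Ioi_exp_neg_mul_mul {f : ℝ → ℝ} (hf : IntegrableOn f (Ioi 0)) {a : ℝ}
    (ha : 0 ≤ a) : IntegrableOn (fun t => exp (-a * t) * f t) (Ioi 0) := by
  refine hf.bdd_mul (by fun_prop) (c := 1)
    (ae_restrict_of_forall_mem measurableSet_Ioi fun t (ht : 0 < t) => ?_)
  rw [norm_of_nonneg (exp_pos _).le, exp_le_one_iff, neg_mul, neg_nonpos]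
  exact mul_nonneg ha ht.le

theorem integral_abs_exp_mul_le {f : ℝ → ℝ} {C a : ℝ} (ha : 0 < a)
    (hfC : ∀ t ∈ Ioi 0, |f t| ≤ C) :
    ∫ t in Ioi 0, |exp (-a * t) * f t| ≤ C / a := by
  have hexp : ∫ t in Ioi 0, exp (-a * t) = 1 / a := by
    rw [integral_exp_mul_Ioi (neg_lt_zero.2 ha), mul_zero, exp_zero]
    field_simp
  calc ∫ t in Ioi 0, |exp (-a * t) * f t| ≤ ∫ t in Ioi 0, C * exp (-a * t) := by
        refine integral_mono_of_nonneg (.of_forall fun t => abs_nonneg _)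
          ((exp_neg_integrableOn_Ioi 0 ha).const_mul C) ?_
        filter_upwards [ae_restrict_mem measurableSet_Ioi] with t ht
        rw [abs_mul, abs_of_pos (exp_pos _), mul_comm]
        exact mul_le_mul_of_nonneg_right (hfC t ht) (exp_pos _).le
    _ = C / a := by rw [integral_const_mul, hexp, mul_one_div]

theorem abs_integral_exp_mul_le {f : ℝ → ℝ} {C a : ℝ} (ha : 0 < a)
    (hfC : ∀ t ∈ Ioi 0, |f t| ≤ C) :
    |∫ t in Ioi 0, exp (-a * t) * f t| ≤ C / a :=
  (abs_integral_le_integral_abs).trans (integral_abs_exp_mul_le ha hfC)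

theorem hasSum_integral_theta_mul (z : ℝ) {c C : ℝ} (hc : 0 < c) {f : ℝ → ℝ}
    (hf : IntegrableOn f (Ioi 0)) (hfC : ∀ t ∈ Ioi 0, |f t| ≤ C) :
    HasSum (fun k : ℕ => thetaCoeff z k * ∫ t in Ioi 0, exp (-((π * k) ^ 2 / c) * t) * f t)
      (∫ t in Ioi 0, theta z (t / c) * f t) := by
  set F : ℕ → ℝ → ℝ := fun k t => thetaCoeff z k * (exp (-((π * k) ^ 2 / c) * t) * f t)
  have hF_int (k : ℕ) : IntegrableOn (F k) (Ioi 0) :=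
    (integrableOn_Ioi_exp_neg_mul_mul hf (by positivity)).const_mul _
  have hF_norm (m : ℕ) :
      ∫ t in Ioi 0, ‖F (m + 1) t‖ ≤ 2 * (C / ((π * (m + 1)) ^ 2 / c)) := by
    simp only [F, Real.norm_eq_abs, abs_mul (thetaCoeff z _), integral_const_mul, Nat.cast_add,
      Nat.cast_one]
    exact mul_le_mul (abs_thetaCoeff_le z _) (integral_abs_exp_mul_le (by positivity) hfC)
      (integral_nonneg fun _ => abs_nonneg _) zero_le_two
  have hF_sum : Summable fun k => ∫ t in Ioi 0, ‖F k t‖ :=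
    (summable_nat_add_iff 1).1 <| .of_nonneg_of_le (fun _ => integral_nonneg fun _ => norm_nonneg _)
      hF_norm ((summable_div_pi_mul_add_one_sq C c).mul_left 2)
  have hF_tsum : ∀ t ∈ Ioi 0, ∑' k, F k t = theta z (t / c) * f t := fun t ht =>
    ((hasSum_theta z (div_pos ht hc)).mul_right (f t)).tsum_eq ▸ tsum_congr fun k => by
      simp only [F]; ring_nf
  simpa only [F, integral_const_mul, setIntegral_congr_fun measurableSet_Ioi hF_tsum]
    using hasSum_integral_of_summable_integral_norm hF_int hF_sum

theorem integral_theta_mul_eq (z : ℝ) {c C : ℝ} (hc : 0 < c) {f : ℝ → ℝ}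
    (hf : IntegrableOn f (Ioi 0)) (hfC : ∀ t ∈ Ioi 0, |f t| ≤ C) :
    ∫ t in Ioi 0, theta z (t / c) * f t = (∫ t in Ioi 0, f t) +
      2 * ∑' m : ℕ, cos (2 * π * z * (m + 1)) *
        ∫ t in Ioi 0, exp (-((π * (m + 1)) ^ 2 / c) * t) * f t := by
  have h := hasSum_integral_theta_mul z hc hf hfC
  rw [← h.tsum_eq, h.summable.tsum_eq_zero_add, ← tsum_mul_left]
  simp [thetaCoeff, mul_assoc]

theorem pow_div_one_add_rpow_le {n : ℕ} (hn : 1 ≤ n) (a : ℝ) {t : ℝ} (ht : 0 ≤ t) :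
    t ^ (n - 1) / (1 + t) ^ ((n : ℝ) + a) ≤ (1 + t) ^ (-(1 + a)) := by
  have h1t : 0 < 1 + t := by linarith
  calc t ^ (n - 1) / (1 + t) ^ ((n : ℝ) + a)
      ≤ (1 + t) ^ ((n : ℝ) - 1) / (1 + t) ^ ((n : ℝ) + a) := by
        rw [← Nat.cast_one (R := ℝ), ← Nat.cast_sub hn, rpow_natCast]
        gcongr
        linarith
    _ = (1 + t) ^ (-(1 + a)) := by rw [← rpow_sub h1t]; ring_nf

theorem integrableOn_pow_div_one_add_rpow {n : ℕ} (hn : 1 ≤ n) {a : ℝ} (ha : 0 < a) :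
    IntegrableOn (fun t : ℝ => t ^ (n - 1) / (1 + t) ^ ((n : ℝ) + a)) (Ioi 0) := by
  have hdom : Integrable (fun t : ℝ => (1 + ‖t‖) ^ (-(1 + a))) :=
    integrable_one_add_norm (by simp [ha])
  refine hdom.integrableOn.mono' (Measurable.aestronglyMeasurable (by fun_prop))
    (ae_restrict_of_forall_mem measurableSet_Ioi fun t (ht : 0 < t) => ?_)
  rw [norm_of_nonneg (by positivity), norm_of_nonneg ht.le]
  exact pow_div_one_add_rpow_le hn a ht.le

theorem abs_pow_div_one_add_rpow_le_one {n : ℕ} (hn : 1 ≤ n) {a : ℝ} (ha : 0 ≤ 1 + a)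
    {t : ℝ} (ht : 0 ≤ t) : |t ^ (n - 1) / (1 + t) ^ ((n : ℝ) + a)| ≤ 1 := by
  rw [abs_of_nonneg (by positivity)]
  exact (pow_div_one_add_rpow_le hn a ht).trans
    (rpow_le_one_of_one_le_of_nonpos (by linarith) (neg_nonpos.2 ha))

theorem ThetaInt_eq_integral_theta_mul (ν : ℝ) {h : ℝ} (hh : 0 < h) {n : ℕ} (hn : 1 ≤ n) :
    ThetaInt ν h n = 1 / (2 * h ^ n) * ∫ t in Ioi 0,
      theta (ν / 2) (t / (2 * h)) * (t ^ (n - 1) / (1 + t) ^ ((n : ℝ) + 1 / 2)) := by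
  obtain ⟨k, rfl⟩ := Nat.exists_eq_add_of_le' hn
  have h2h : 0 < 2 * h := by positivity
  have hcov := integral_comp_mul_left_Ioi
    (fun w => theta (ν / 2) w * w ^ k / (w * h + 1 / 2) ^ ((↑(k + 1) : ℝ) + 1 / 2)) 0
    (inv_pos.2 h2h)
  simp only [mul_zero, inv_inv, smul_eq_mul] at hcov
  rw [← inv_mul_eq_iff_eq_mul₀ h2h.ne'] at hcov
  have hpt : ∀ t ∈ Ioi (0 : ℝ),
      theta (ν / 2) ((2 * h)⁻¹ * t) * ((2 * h)⁻¹ * t) ^ k /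
          ((2 * h)⁻¹ * t * h + 1 / 2) ^ ((↑(k + 1) : ℝ) + 1 / 2) =
        2 * sqrt 2 * (2 * h) / (2 * h ^ (k + 1)) *
          (theta (ν / 2) (t / (2 * h)) * (t ^ k / (1 + t) ^ ((↑(k + 1) : ℝ) + 1 / 2))) := by
    intro t (ht : 0 < t)
    have hhalf : (2 * h)⁻¹ * t * h + 1 / 2 = (1 + t) / 2 := by field_simp; ring
    have htwo : (2 : ℝ) ^ ((↑(k + 1) : ℝ) + 1 / 2) = 2 ^ (k + 1) * sqrt 2 := by
      rw [rpow_add two_pos, rpow_natCast, sqrt_eq_rpow]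
    rw [hhalf, div_rpow (by positivity) zero_le_two, htwo, ← div_eq_inv_mul, div_pow]
    field_simp
    ring
  simp only [Nat.add_sub_cancel, ThetaInt]
  rw [← hcov, setIntegral_congr_fun measurableSet_Ioi hpt, integral_const_mul]
  field_simp

/-- The first series for the Theta integrals, in terms of the integrals
`I_n(z) = ∫_0^∞ e^{-zt} t^{n-1} (1+t)^{-(n+1/2)} dt = Γ(n) Ψ(n, 1/2; z)`:
`Θ_n(h) = (1/(2h^n)) I_n(0) + (1/h^n) Σ_{m≥1} cos(πmν) I_n((πm)²/(2h))`, the series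
converging absolutely. -/
theorem theta_integral_first_series (ν h : ℝ) (hh : 0 < h) (n : ℕ) (hn : 1 ≤ n) :
    letI I : ℝ → ℝ := fun z =>
      ∫ t in Set.Ioi (0:ℝ), Real.exp (-z*t) * t^(n-1) / (1+t) ^ ((n:ℝ) + 1/2)
    Summable (fun m : ℕ =>
      |Real.cos (Real.pi*((m:ℝ)+1)*ν) * I ((Real.pi*((m:ℝ)+1))^2/(2*h))|) ∧
    ThetaInt ν h n
      = (1/(2*h^n)) * I 0
        + (1/h^n) * ∑' m : ℕ, Real.cos (Real.pi*((m:ℝ)+1)*ν) * I ((Real.pi*((m:ℝ)+1))^2/(2*h)) := by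
  beta_reduce
  set f : ℝ → ℝ := fun t => t ^ (n - 1) / (1 + t) ^ ((n : ℝ) + 1 / 2)
  have hf : IntegrableOn f (Ioi 0) := integrableOn_pow_div_one_add_rpow hn one_half_pos
  have hf_le : ∀ t ∈ Ioi 0, |f t| ≤ 1 := fun t (ht : 0 < t) =>
    abs_pow_div_one_add_rpow_le_one hn (by norm_num) ht.le
  have hI (z : ℝ) : ∫ t in Ioi 0, exp (-z * t) * t ^ (n - 1) / (1 + t) ^ ((n : ℝ) + 1 / 2) =
      ∫ t in Ioi 0, exp (-z * t) * f t := by simp only [f, mul_div_assoc]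
  simp only [hI]
  refine ⟨.of_nonneg_of_le (fun _ => abs_nonneg _) (fun m => ?_)
    (summable_div_pi_mul_add_one_sq 1 (2 * h)), ?_⟩
  · rw [abs_mul]
    exact (mul_le_of_le_one_left (abs_nonneg _) (abs_cos_le_one _)).trans
      (abs_integral_exp_mul_le (by positivity) hf_le)
  · have hcos (m : ℕ) : cos (2 * π * (ν / 2) * (m + 1)) = cos (π * (m + 1) * ν) := by ring_nf
    rw [ThetaInt_eq_integral_theta_mul ν hh hn,
      integral_theta_mul_eq (ν / 2) (by positivity) hf hf_le]
    simp only [hcos, neg_zero, zero_mul, exp_zero, one_mul]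
    ring
end
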